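/- The substitution identity for assignment translation: for any assertion ψ, version function V, expression e, and variable x, renaming ψ by V[x ↦ next(V(x))] and then substituting x_{next(V(x))} by V̂(e) yields exactly V̂(ψ[x\e]), provided x_{next(V(x))} does not occur in V̂(ψ) other than via x. -/

import Mathlib

set_option autoImplicit false

namespace SAPV

/-- Variable identifiers. -/
abbrev Idt : Type := String
/-- Versions: nonempty lists of numbers, represented as (head, tail). -/
abbrev Ver : Type := ℕ × List ℕ
/-- Single-assignment variables: identifier together with a version. -/
abbrev Vsa : Type := Idt × Ver

/-- Commands of the While language over variables `α` (shallow expressions). -/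
inductive Cmd (α : Type) : Type where
  | skip : Cmd α
  | assign (x : α) (e : (α → Int) → Int) : Cmd α
  | seq (c₁ c₂ : Cmd α) : Cmd α
  | ite (b : (α → Int) → Bool) (ct cf : Cmd α) : Cmd α
  | while (b : (α → Int) → Bool) (c : Cmd α) : Cmd α

/-- Annotated commands: while loops carry an invariant annotation. -/
inductive ACmd (α : Type) : Type where
  | skip : ACmd α
  | assign (x : α) (e : (α → Int) → Int) : ACmd α
  | seq (c₁ c₂ : ACmd α) : ACmd α
  | ite (b : (α → Int) → Bool) (ct cf : ACmd α) : ACmd α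
  | while (b : (α → Int) → Bool) (inv : (α → Int) → Prop) (c : ACmd α) : ACmd α

variable {α : Type}

/-- Erasure of annotations. -/
def erase : ACmd α → Cmd α
  | .skip => .skip
  | .assign x e => .assign x e
  | .seq c₁ c₂ => .seq (erase c₁) (erase c₂)
  | .ite b ct cf => .ite b (erase ct) (erase cf)
  | .while b _ c => .while b (erase c)

section WithDec
variable [DecidableEq α]

/-- Big-step operational semantics of While programs. -/
inductive BigStep : Cmd α → (α → Int) → (α → Int) → Prop where
  | skip (s : α → Int) : BigStep .skip s s
  | assign (x : α) (e : (α → Int) → Int) (s : α → Int) :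
      BigStep (.assign x e) s (Function.update s x (e s))
  | seq {c₁ c₂ : Cmd α} {s s' s'' : α → Int} :
      BigStep c₁ s s' → BigStep c₂ s' s'' → BigStep (.seq c₁ c₂) s s''
  | iteTrue {b : (α → Int) → Bool} {ct cf : Cmd α} {s s' : α → Int} :
      b s = true → BigStep ct s s' → BigStep (.ite b ct cf) s s'
  | iteFalse {b : (α → Int) → Bool} {ct cf : Cmd α} {s s' : α → Int} :
      b s = false → BigStep cf s s' → BigStep (.ite b ct cf) s s'
  | whileTrue {b : (α → Int) → Bool} {c : Cmd α} {s s' s'' : α → Int} :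
      b s = true → BigStep c s s' →
      BigStep (.while b c) s' s'' → BigStep (.while b c) s s''
  | whileFalse {b : (α → Int) → Bool} {c : Cmd α} {s : α → Int} :
      b s = false → BigStep (.while b c) s s

/-- Validity of a (partial-correctness) Hoare triple. -/
def Valid (φ : (α → Int) → Prop) (c : Cmd α) (ψ : (α → Int) → Prop) : Prop :=
  ∀ s s' : α → Int, φ s → BigStep c s s' → ψ s'

/-- System HL: standard Hoare logic with a consequence rule. -/
inductive HL : ((α → Int) → Prop) → Cmd α → ((α → Int) → Prop) → Prop where
  | skip (φ : (α → Int) → Prop) : HL φ .skip φ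
  | assign (ψ : (α → Int) → Prop) (x : α) (e : (α → Int) → Int) :
      HL (fun s => ψ (Function.update s x (e s))) (.assign x e) ψ
  | seq {φ θ ψ : (α → Int) → Prop} {c₁ c₂ : Cmd α} :
      HL φ c₁ θ → HL θ c₂ ψ → HL φ (.seq c₁ c₂) ψ
  | ite {φ ψ : (α → Int) → Prop} {b : (α → Int) → Bool} {ct cf : Cmd α} :
      HL (fun s => φ s ∧ b s = true) ct ψ →
      HL (fun s => φ s ∧ b s = false) cf ψ →
      HL φ (.ite b ct cf) ψ
  | while {θ : (α → Int) → Prop} {b : (α → Int) → Bool} {c : Cmd α} :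
      HL (fun s => θ s ∧ b s = true) c θ →
      HL θ (.while b c) (fun s => θ s ∧ b s = false)
  | conseq {φ φ' ψ ψ' : (α → Int) → Prop} {c : Cmd α} :
      (∀ s, φ' s → φ s) → HL φ c ψ → (∀ s, ψ s → ψ' s) → HL φ' c ψ'

/-- System Hg: goal-directed Hoare logic for annotated programs (no consequence rule). -/
inductive Hg : ((α → Int) → Prop) → ACmd α → ((α → Int) → Prop) → Prop where
  | skip {φ ψ : (α → Int) → Prop} : (∀ s, φ s → ψ s) → Hg φ .skip ψ
  | assign {φ ψ : (α → Int) → Prop} (x : α) (e : (α → Int) → Int) :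
      (∀ s, φ s → ψ (Function.update s x (e s))) → Hg φ (.assign x e) ψ
  | seq {φ θ ψ : (α → Int) → Prop} {c₁ c₂ : ACmd α} :
      Hg φ c₁ θ → Hg θ c₂ ψ → Hg φ (.seq c₁ c₂) ψ
  | ite {φ ψ : (α → Int) → Prop} {b : (α → Int) → Bool} {ct cf : ACmd α} :
      Hg (fun s => φ s ∧ b s = true) ct ψ →
      Hg (fun s => φ s ∧ b s = false) cf ψ →
      Hg φ (.ite b ct cf) ψ
  | while {φ ψ θ : (α → Int) → Prop} {b : (α → Int) → Bool} {c : ACmd α} :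
      (∀ s, φ s → θ s) → (∀ s, θ s ∧ b s = false → ψ s) →
      Hg (fun s => θ s ∧ b s = true) c θ →
      Hg φ (.while b θ c) ψ

/-- Variables assigned in a command. -/
def assignedC : Cmd α → Finset α
  | .skip => ∅
  | .assign x _ => {x}
  | .seq c₁ c₂ => assignedC c₁ ∪ assignedC c₂
  | .ite _ ct cf => assignedC ct ∪ assignedC cf
  | .while _ c => assignedC c

/-- Variables assigned in an annotated command. -/
def assignedA : ACmd α → Finset α
  | .skip => ∅
  | .assign x _ => {x}
  | .seq c₁ c₂ => assignedA c₁ ∪ assignedA c₂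
  | .ite _ ct cf => assignedA ct ∪ assignedA cf
  | .while _ _ c => assignedA c

/-- `Indep φ X`: the assertion φ does not depend on the variables in `X`
(i.e. the free variables of φ are disjoint from `X`). -/
def Indep (φ : (α → Int) → Prop) (X : Finset α) : Prop :=
  ∀ s s' : α → Int, (∀ x, x ∉ X → s x = s' x) → (φ s ↔ φ s')

/-- The renaming `x1:=y1; ...; xn:=yn` as a command. -/
def renCmd (l : List (α × α)) : Cmd α :=
  l.foldr (fun p c => .seq (.assign p.1 (fun s => s p.2)) c) .skip

/-- The renaming as an annotated command. -/
def renACmd (l : List (α × α)) : ACmd α :=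
  l.foldr (fun p c => .seq (.assign p.1 (fun s => s p.2)) c) .skip

/-- Side condition for renamings: all the `xi` and `yi` are pairwise distinct. -/
def RenOK (l : List (α × α)) : Prop :=
  (l.map Prod.fst ++ l.map Prod.snd).Nodup

/-- The renamed state `R(s)`: `R(s)(x) = s(R(x))` for `x ∈ dom R`, else `s(x)`. -/
def renState (l : List (α × α)) (s : α → Int) : α → Int :=
  fun x => match l.find? (fun p => decide (p.1 = x)) with
    | some p => s p.2
    | none => s x

/-- The substituted assertion `R(φ)` (simultaneous substitution `xi ↦ yi`). -/
def renAssert (l : List (α × α)) (φ : (α → Int) → Prop) : (α → Int) → Prop :=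
  fun s => φ (renState l s)

end WithDec

/-! ### Single-assignment part -/

/-- `V̂(x) = x_{V(x)}`. -/
def vhat (V : Idt → Ver) (x : Idt) : Vsa := (x, V x)

/-- Lift (rename) an expression along a variable renaming `m`. -/
def liftE (m : Idt → Vsa) (e : (Idt → Int) → Int) : (Vsa → Int) → Int :=
  fun s => e (fun x => s (m x))

/-- Lift a boolean expression. -/
def liftB (m : Idt → Vsa) (b : (Idt → Int) → Bool) : (Vsa → Int) → Bool :=
  fun s => b (fun x => s (m x))

/-- Lift an assertion. -/
def liftA (m : Idt → Vsa) (φ : (Idt → Int) → Prop) : (Vsa → Int) → Prop :=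
  fun s => φ (fun x => s (m x))

/-- The partial SA-state `V(s) = [x_{V(x)} ↦ s(x) | x ∈ V]`. -/
def pstate (V : Idt → Ver) (s : Idt → Int) : Vsa → Option Int :=
  fun v => if V v.1 = v.2 then some (s v.1) else none

/-- Override of a total function by a partial one: `(f ⊕ g)(x) = g(x)` if defined, else `f(x)`. -/
def ov {β : Type} (f : β → Int) (g : β → Option Int) : β → Int :=
  fun x => (g x).getD (f x)

/-- `next` increments the head of a version. -/
def vnext (l : Ver) : Ver := (l.1 + 1, l.2)

/-- `new` prepends a `1` to a version. -/
def vnew (l : Ver) : Ver := (1, l.1 :: l.2)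

/-- `jump` merges the first two elements of a version. -/
def vjump (l : Ver) : Ver :=
  match l.2 with
  | [] => l
  | j :: t => (j + 1, t)

/-- `(h:t) ≺ (h':t')` iff `h < h'`. -/
def vprec (l l' : Ver) : Prop := l.1 < l'.1

/-- `sup(V,V')`: the pointwise highest version. -/
def vsup (V V' : Idt → Ver) : Idt → Ver :=
  fun x => if (V' x).1 < (V x).1 then V x else V' x

/-- `merge(V,V')`: the renaming `[x_{V'(x)} := x_{V(x)} | x ∈ X, V(x) ≺ V'(x)]`. -/
def mergeRen (X : Finset Idt) (V V' : Idt → Ver) : List (Vsa × Vsa) :=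
  (X.sort (· ≤ ·)).filterMap
    (fun x => if (V x).1 < (V' x).1 then some ((x, V' x), (x, V x)) else none)

/-- Annotated single-assignment programs, with for-loops
`for(I, b, U) do {θ} C` carrying initialization and update renamings. -/
inductive SACom : Type where
  | skip : SACom
  | assign (x : Vsa) (e : (Vsa → Int) → Int) : SACom
  | seq (c₁ c₂ : SACom) : SACom
  | ite (b : (Vsa → Int) → Bool) (ct cf : SACom) : SACom
  | forloop (I : List (Vsa × Vsa)) (b : (Vsa → Int) → Bool)
      (U : List (Vsa × Vsa)) (inv : (Vsa → Int) → Prop) (c : SACom) : SACom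

/-- Renaming as an SA command. -/
def renSACmd (l : List (Vsa × Vsa)) : SACom :=
  l.foldr (fun p c => .seq (.assign p.1 (fun s => s p.2)) c) .skip

/-- `W` (called `Tinv` in the paper): translate SA programs back into annotated
While programs; `for(I,b,U,θ) do C` becomes `I ; while b do {θ} (W(C); U)`. -/
def W : SACom → ACmd Vsa
  | .skip => .skip
  | .assign x e => .assign x e
  | .seq c₁ c₂ => .seq (W c₁) (W c₂)
  | .ite b ct cf => .ite b (W ct) (W cf)
  | .forloop I b U inv c => .seq (renACmd I) (.while b inv (.seq (W c) (renACmd U)))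

/-- The translation `tsa` of annotated While programs into SA form. -/
def tsa : (Idt → Ver) → ACmd Idt → (Idt → Ver) × SACom
  | V, .skip => (V, .skip)
  | V, .assign x e =>
      (Function.update V x (vnext (V x)), .assign (x, vnext (V x)) (liftE (vhat V) e))
  | V, .seq c₁ c₂ =>
      let r₁ := tsa V c₁
      let r₂ := tsa r₁.1 c₂
      (r₂.1, .seq r₁.2 r₂.2)
  | V, .ite b ct cf =>
      let rt := tsa V ct
      let rf := tsa V cf
      let X := assignedA ct ∪ assignedA cf
      (vsup rt.1 rf.1,
       .ite (liftB (vhat V) b)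
         (.seq rt.2 (renSACmd (mergeRen X rt.1 rf.1)))
         (.seq rf.2 (renSACmd (mergeRen X rf.1 rt.1))))
  | V, .while b inv c =>
      let A := assignedA c
      let L := A.sort (· ≤ ·)
      let I := L.map (fun x => ((x, vnew (V x)), (x, V x)))
      let V' := fun x => if x ∈ A then vnew (V x) else V x
      let r := tsa V' c
      let U := L.map (fun x => ((x, vnew (V x)), (x, r.1 x)))
      (fun x => if x ∈ A then vjump (vnew (V x)) else r.1 x,
       .seq (.forloop I (liftB (vhat V') b) U (liftA (vhat V') inv) r.2)
            (renSACmd (L.map (fun x => ((x, vjump (vnew (V x))), (x, vnew (V x)))))))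

theorem vnext_ne (l : Ver) : vnext l ≠ l := by
  simp [vnext, Prod.ext_iff]

theorem vhat_update (V : Idt → Ver) (x : Idt) (l : Ver) :
    vhat (Function.update V x l) = Function.update (vhat V) x (x, l) := by
  funext y
  by_cases hy : y = x
  · subst hy
    simp [vhat]
  · simp [vhat, hy]

/-- Since `(x, l)` is not in the range of `vhat V`, the store at `(x, l)` is seen only through
the new version of `x`. -/
theorem liftA_update_vhat_of_ne {V : Idt → Ver} {x : Idt} {l : Ver} (hl : l ≠ V x)
    (ψ : (Idt → Int) → Prop) (s' : Vsa → Int) (v : Int) :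
    liftA (vhat (Function.update V x l)) ψ (Function.update s' (x, l) v)
      = ψ (Function.update (s' ∘ vhat V) x v) := by
  have hfresh : ∀ y, vhat V y ≠ (x, l) := by
    intro y hy
    obtain ⟨rfl, hV⟩ := Prod.ext_iff.mp hy
    exact hl hV.symm
  change ψ (Function.update s' (x, l) v ∘ vhat (Function.update V x l)) = _
  rw [vhat_update, Function.comp_update, Function.update_comp_eq_of_forall_ne _ _ hfresh,
    Function.update_self]

/-- the substitution identity for assignment translation:
`(V[x↦next(V(x))])^(ψ)[x_{next(V(x))} \ V̂(e)] = V̂(ψ[x\e])`. -/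
theorem subst_assign_identity (ψ : (Idt → Int) → Prop) (V : Idt → Ver)
    (e : (Idt → Int) → Int) (x : Idt) :
    (fun s' : Vsa → Int =>
        liftA (vhat (Function.update V x (vnext (V x)))) ψ
          (Function.update s' (x, vnext (V x)) (liftE (vhat V) e s')))
      = liftA (vhat V) (fun s => ψ (Function.update s x (e s))) :=
  funext fun s' => liftA_update_vhat_of_ne (vnext_ne (V x)) ψ s' _

end SAPV
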